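/- Let u, v ∈ ℝ^d be nonzero vectors and suppose real numbers a, b, c satisfy |a − ⟨u,v⟩| ≤ ε, |b − ‖u‖²| ≤ ε‖u‖², |c − ‖v‖²| ≤ ε‖v‖², with b, c > 0 and ε ∈ (0, 1/2). Then |a/√(bc) − ⟨u,v⟩/(‖u‖‖v‖)| ≤ Cε(1 + ‖u‖‖v‖)/(‖u‖‖v‖) for an absolute constant C. -/

import Mathlib

/-!
Write `p = ⟨u,v⟩`, `q = ‖u‖‖v‖` and `r = √(bc)`. The hypotheses on `b` and `c` give
`|r - q| ≤ εq`, so `r ≥ q/2`, and Cauchy–Schwarz gives `|p/q| ≤ 1`. The identity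
`a/r - p/q = (a - p - (p/q)(r - q))/r` then bounds the error by `(ε + εq)/(q/2)`, i.e. `C = 2`.
-/

lemma sum_sq_pos_of_ne_zero {ι : Type*} [Fintype ι] {u : ι → ℝ} (hu : u ≠ 0) :
    0 < ∑ i, u i ^ 2 := by
  obtain ⟨i, hi⟩ := Function.ne_iff.1 hu
  exact Finset.sum_pos' (fun j _ => sq_nonneg (u j)) ⟨i, Finset.mem_univ i, sq_pos_of_ne_zero hi⟩

lemma abs_sum_mul_le_sqrt_mul_sqrt {ι : Type*} (s : Finset ι) (f g : ι → ℝ) :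
    |∑ i ∈ s, f i * g i| ≤ √(∑ i ∈ s, f i ^ 2) * √(∑ i ∈ s, g i ^ 2) := by
  refine abs_le'.2 ⟨Real.sum_mul_le_sqrt_mul_sqrt s f g, ?_⟩
  simpa [Finset.sum_neg_distrib] using Real.sum_mul_le_sqrt_mul_sqrt s f (-g)

lemma abs_sqrt_mul_sub_le {b c U V ε : ℝ} (hε₀ : 0 ≤ ε) (hε : ε ≤ 1)
    (hU : 0 ≤ U) (hV : 0 ≤ V) (hb : |b - U| ≤ ε * U) (hc : |c - V| ≤ ε * V) :
    |√(b * c) - √U * √V| ≤ ε * (√U * √V) := by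
  obtain ⟨hb₁, hb₂⟩ := abs_le.1 hb
  obtain ⟨hc₁, hc₂⟩ := abs_le.1 hc
  have hsq (t : ℝ) : (t * (√U * √V)) ^ 2 = (t * U) * (t * V) := by
    rw [mul_pow, mul_pow, Real.sq_sqrt hU, Real.sq_sqrt hV]; ring
  have hlow : (1 - ε) * (√U * √V) ≤ √(b * c) := by
    refine Real.le_sqrt_of_sq_le ?_
    rw [hsq]
    exact mul_le_mul (by linarith) (by linarith) (mul_nonneg (by linarith) hV) (by nlinarith)
  have hup : √(b * c) ≤ (1 + ε) * (√U * √V) := by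
    rw [Real.sqrt_le_left (by positivity), hsq]
    exact mul_le_mul (by linarith) (by linarith) (by nlinarith) (by nlinarith)
  exact abs_le.2 ⟨by linarith, by linarith⟩

lemma abs_div_sub_div_le {a p q r : ℝ} (hq : q ≠ 0) (hr : 0 < r) :
    |a / r - p / q| ≤ (|a - p| + |p / q| * |r - q|) / r := by
  have key : a / r - p / q = (a - p - p / q * (r - q)) / r := by
    field_simp
    ring
  rw [key, abs_div, abs_of_pos hr, ← abs_mul]
  gcongr
  exact abs_sub _ _

/-- Deterministic perturbation lemma: if the inner product and the
two squared norms are approximately preserved, then the cosine similarity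
a/√(bc) is close to ⟨u,v⟩/(‖u‖‖v‖). -/
theorem cosine_perturbation_lemma :
    ∃ C : ℝ, 0 < C ∧
      ∀ (d : ℕ) (u v : Fin d → ℝ), u ≠ 0 → v ≠ 0 →
        ∀ (a b c ε : ℝ), 0 < ε → ε < 1 / 2 → 0 < b → 0 < c →
          |a - ∑ i, u i * v i| ≤ ε →
          |b - ∑ i, u i ^ 2| ≤ ε * ∑ i, u i ^ 2 →
          |c - ∑ i, v i ^ 2| ≤ ε * ∑ i, v i ^ 2 →
          |a / Real.sqrt (b * c)
              - (∑ i, u i * v i)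
                  / (Real.sqrt (∑ i, u i ^ 2) * Real.sqrt (∑ i, v i ^ 2))|
            ≤ C * ε * (1 + Real.sqrt (∑ i, u i ^ 2) * Real.sqrt (∑ i, v i ^ 2))
                / (Real.sqrt (∑ i, u i ^ 2) * Real.sqrt (∑ i, v i ^ 2)) := by
  refine ⟨2, two_pos, fun d u v hu hv a b c ε hε hε₂ _ _ ha hbU hcV => ?_⟩
  set q := √(∑ i, u i ^ 2) * √(∑ i, v i ^ 2)
  set r := √(b * c)
  have hq : 0 < q := mul_pos (Real.sqrt_pos.2 (sum_sq_pos_of_ne_zero hu))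
    (Real.sqrt_pos.2 (sum_sq_pos_of_ne_zero hv))
  have hcos : |(∑ i, u i * v i) / q| ≤ 1 := by
    rw [abs_div, abs_of_pos hq, div_le_one hq]
    exact abs_sum_mul_le_sqrt_mul_sqrt _ u v
  have hrq : |r - q| ≤ ε * q := abs_sqrt_mul_sub_le hε.le (by linarith)
    (Finset.sum_nonneg fun i _ => sq_nonneg (u i)) (Finset.sum_nonneg fun i _ => sq_nonneg (v i))
    hbU hcV
  have hr : q / 2 ≤ r := by nlinarith [(abs_le.1 hrq).1]
  calc |a / r - (∑ i, u i * v i) / q|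
      ≤ (|a - ∑ i, u i * v i| + |(∑ i, u i * v i) / q| * |r - q|) / r :=
        abs_div_sub_div_le hq.ne' (by linarith)
    _ ≤ (ε + 1 * (ε * q)) / (q / 2) := by gcongr
    _ = 2 * ε * (1 + q) / q := by field_simp
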